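/- arXiv:2108.01900 — 7 statements merged into one kernel-verified Lean document; each statement's English description precedes it below -/
import Mathlib

section
/- (Unanimous next-frame voting.) Let S be a set of validators with 3·w(S) > 2·W (the validators whose roots voted YES for a given subject root, having at least quorum stake), and let T be a set of validators with 3·w(T) > 2·W (the previous-frame roots observed by any root of the next frame, which by the definition of root also has at least quorum stake). Then w(S ∩ T) > w(T \ S); that is, within T the validators belonging to S hold a strict majority of T's total stake, so every root on the next frame votes for the same decided color. -/
/-- **Unanimous next-frame voting.** If `S` is a set of validators with more
than `2W/3` total stake (the YES-voters for a subject root) and `T` is a set of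
validators with more than `2W/3` total stake (the previous-frame roots observed
by a root of the next frame), then within `T` the validators belonging to `S`
hold a strict majority of `T`'s stake: `w(S ∩ T) > w(T \ S)`. -/
theorem unanimous_next_frame_voting {α : Type*} [Fintype α] [DecidableEq α]
    (w : α → ℕ) (W : ℕ) (hW : W = ∑ x, w x)
    (S T : Finset α)
    (hS : 3 * ∑ x ∈ S, w x > 2 * W)
    (hT : 3 * ∑ x ∈ T, w x > 2 * W) :
    ∑ x ∈ S ∩ T, w x > ∑ x ∈ T \ S, w x := by
  have hsplit : ∑ x ∈ S ∩ T, w x + ∑ x ∈ T \ S, w x = ∑ x ∈ T, w x := by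
    rw [Finset.inter_comm]
    exact Finset.sum_inter_add_sum_sdiff T S w
  have hle : ∑ x ∈ S, w x + ∑ x ∈ T \ S, w x ≤ W := by
    rw [hW, ← Finset.sum_union (Finset.disjoint_sdiff)]
    exact Finset.sum_le_sum_of_subset (Finset.subset_univ _)
  omega
end

section
/- (Consistent DAGs have consistent layerings.) Let G1 and G2 be parent-closed subsets of E both containing an event v, and for i = 1, 2 let φ_i : G_i → ℕ be the longest-path layering of the DAG induced on G_i, i.e., the unique function satisfying φ_i(e) = (sup of φ_i(u) over parents u ∈ p(e)) + 1 for all e ∈ G_i. Then φ_1(v) = φ_2(v). -/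
/-- A subset `G` of events is parent-closed (a local OPERA DAG) if the
parents of every event of `G` belong to `G`. -/
def ParentClosed {E : Type*} (p : E → Finset E) (G : Set E) : Prop :=
  ∀ e ∈ G, ∀ u ∈ p e, u ∈ G

/-- **Consistent DAGs have consistent layerings.**  Let `G1` and `G2` be
parent-closed subsets of `E` both containing an event `v`, and let `φ1`, `φ2`
be the longest-path layerings of the DAGs induced on `G1` and `G2`
respectively, i.e. they satisfy the recursion
`φᵢ e = (sup of φᵢ over the parents of e) + 1` for every `e ∈ Gᵢ`.
Then `φ1 v = φ2 v`. -/
theorem consistent_layering {E : Type*} (p : E → Finset E)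
    (hwf : WellFounded (fun u v => u ∈ p v))
    (G1 G2 : Set E) (hC1 : ParentClosed p G1) (hC2 : ParentClosed p G2)
    (φ1 φ2 : E → ℕ)
    (hφ1 : ∀ e ∈ G1, φ1 e = (p e).sup φ1 + 1)
    (hφ2 : ∀ e ∈ G2, φ2 e = (p e).sup φ2 + 1)
    (v : E) (hv1 : v ∈ G1) (hv2 : v ∈ G2) :
    φ1 v = φ2 v := by
  induction v using hwf.induction with
  | _ v ih =>
    rw [hφ1 v hv1, hφ2 v hv2]
    congr 1
    exact Finset.sup_congr rfl fun u hu =>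
      ih u hu (hC1 v hv1 u hu) (hC2 v hv2 u hu)
end

section
/- (Lamport's total ordering.) Let E be a type of events, P a linearly ordered type of process identifiers, pid : E → P the creator map, and C : E → ℕ a clock such that any two distinct events of the same process have distinct clock values (pid e = pid e' and C e = C e' imply e = e'). Define e ⇒ e' iff C e < C e', or C e = C e' and pid e < pid e'. Then ⇒ is a strict total order on E (irreflexive, transitive, and any two distinct events are comparable). Moreover, if a happened-before relation → on E satisfies the Clock Condition (e → e' implies C e < C e'), then e → e' implies e ⇒ e'. -/
/-- **Lamport's total ordering.**  Let `pid : E → P` assign each event its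
(linearly ordered) process identifier and `C : E → ℕ` a logical clock such
that distinct events of the same process have distinct clock values.  Order
events first by clock value and then by process identifier:
`e ⇒ e' iff C e < C e' ∨ (C e = C e' ∧ pid e < pid e')`.
Then `⇒` is a strict total order (irreflexive, transitive, total on distinct
events), and any happened-before relation satisfying the Clock Condition is
contained in `⇒`. -/
theorem lamport_total_ordering {E : Type*} {P : Type*} [LinearOrder P]
    (pid : E → P) (C : E → ℕ)
    (hinj : ∀ e e', pid e = pid e' → C e = C e' → e = e') :
    let lt : E → E → Prop := fun e e' =>
      C e < C e' ∨ (C e = C e' ∧ pid e < pid e')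
    Irreflexive lt ∧ Transitive lt ∧
    (∀ e e', e ≠ e' → lt e e' ∨ lt e' e) ∧
    (∀ hb : E → E → Prop, (∀ e e', hb e e' → C e < C e') →
      ∀ e e', hb e e' → lt e e') := by
  intro lt
  refine ⟨?_, ?_, ?_, ?_⟩
  · intro e h
    rcases h with h | ⟨_, h⟩ <;> exact lt_irrefl _ h
  · rintro a b c (h | ⟨h1, h2⟩) (h' | ⟨h1', h2'⟩)
    · exact Or.inl (h.trans h')
    · exact Or.inl (h1' ▸ h)
    · exact Or.inl (h1 ▸ h')
    · exact Or.inr ⟨h1.trans h1', h2.trans h2'⟩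
  · intro e e' hne
    rcases lt_trichotomy (C e) (C e') with h | h | h
    · exact Or.inl (Or.inl h)
    · rcases lt_trichotomy (pid e) (pid e') with hp | hp | hp
      · exact Or.inl (Or.inr ⟨h, hp⟩)
      · exact absurd (hinj e e' hp h) hne
      · exact Or.inr (Or.inr ⟨h.symm, hp⟩)
    · exact Or.inr (Or.inl h)
  · intro hb hcc e e' h
    exact Or.inl (hcc e e' h)
end

section
/- (Majority concurrent knowledge of local facts.) Let P be a finite type of n process identifiers, let L ⊆ P be a set of processes to each of which the fact φ is local, with 3·|L| ≥ 2·n, and let S ⊆ P with 3·|S| > 2·n. Define M^C(φ) to hold at a cut c iff K_i(P_i(φ)) holds at c for every i ∈ S ('majority concurrently knows φ'). Then for every cut c, M^C(φ) holding at c implies that φ holds at c. -/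
/-- Process `i` knows fact `φ` at cut `c`. -/
def Knows {Cut R P S : Type*} (run : Cut → R) (loc : P → Cut → S)
    (i : P) (φ : Cut → Prop) (c : Cut) : Prop :=
  ∀ c', loc i c' = loc i c → φ c'

/-- Process `i` partially knows fact `φ` at cut `c`. -/
def PartiallyKnows {Cut R P S : Type*} (run : Cut → R) (loc : P → Cut → S)
    (i : P) (φ : Cut → Prop) (c : Cut) : Prop :=
  ∃ c', run c' = run c ∧ loc i c' = loc i c ∧ φ c'

/-- Fact `φ` is local to process `i`. -/
def LocalFact {Cut R P S : Type*} (run : Cut → R) (loc : P → Cut → S)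
    (i : P) (φ : Cut → Prop) : Prop :=
  ∀ c, φ c → Knows run loc i φ c

/-- "Majority concurrently knows": every process of the set `S` (holding more
than two-thirds of the processes) knows that it partially knows `φ`. -/
def MajorityConcurrentlyKnows {Cut R P St : Type*} (run : Cut → R)
    (loc : P → Cut → St) (S : Finset P) (φ : Cut → Prop) (c : Cut) : Prop :=
  ∀ i ∈ S, Knows run loc i (PartiallyKnows run loc i φ) c

/-- **Majority concurrent knowledge of local facts.**  If `φ` is local to each
process in a set `L` with `3·|L| ≥ 2·n` and `S` is a set of processes with
`3·|S| > 2·n`, then `M^C(φ) ⇒ φ` at every cut. -/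
theorem majority_concurrently_knows_of_local_fact
    {Cut R St : Type*} {P : Type*} [Fintype P]
    (run : Cut → R) (loc : P → Cut → St) (φ : Cut → Prop)
    (L S : Finset P)
    (hL : ∀ i ∈ L, LocalFact run loc i φ)
    (hLcard : 3 * L.card ≥ 2 * Fintype.card P)
    (hScard : 3 * S.card > 2 * Fintype.card P) :
    ∀ c, MajorityConcurrentlyKnows run loc S φ c → φ c := by
  classical
  intro c hM
  have hn : S.card ≤ Fintype.card P := S.card_le_univ
  have hinter : (L ∩ S).Nonempty := by
    rw [← Finset.card_pos]
    have hu : (L ∪ S).card ≤ Fintype.card P := (L ∪ S).card_le_univ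
    have := Finset.card_inter_add_card_union L S
    omega
  obtain ⟨i, hi⟩ := hinter
  have hiL := Finset.mem_inter.mp hi |>.1
  have hiS := Finset.mem_inter.mp hi |>.2
  obtain ⟨c', _, hloc, hφ⟩ := hM i hiS c rfl
  exact hL i hiL c' hφ c hloc.symm
end

section
/- (Concurrent common knowledge of local facts.) Let P be a finite type of n process identifiers and S ⊆ P with 3·|S| > 2·n, and define M^C(ψ) to hold at a cut c iff K_i(P_i(ψ)) holds at c for every i ∈ S. Then for any fact φ: (i) the operator T_φ sending a predicate X on cuts to M^C(φ ⊓ X) is monotone on the complete lattice of predicates on cuts, so it has a greatest fixed point C^C(φ), which satisfies C^C(φ) = M^C(φ ⊓ C^C(φ)); and (ii) if moreover φ is local to each process in a set L ⊆ P with 3·|L| ≥ 2·n, then for every cut c, C^C(φ) holding at c implies that φ holds at c. -/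
/-- **Concurrent common knowledge of local facts.**  The operator
`T_φ : X ↦ M^C(φ ⊓ X)` on the complete lattice of predicates on cuts is
monotone, hence has a greatest fixed point `C^C(φ)` — a fixed point above all
post-fixed points — and if `φ` is local to each process of a set `L` with
`3·|L| ≥ 2·n` while `3·|S| > 2·n`, then `C^C(φ) ⇒ φ` at every cut. -/
theorem concurrent_common_knowledge_of_local_fact
    {Cut R St : Type*} {P : Type*} [Fintype P]
    (run : Cut → R) (loc : P → Cut → St) (φ : Cut → Prop)
    (L S : Finset P)
    (hScard : 3 * S.card > 2 * Fintype.card P) :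
    Monotone (fun (X : Cut → Prop) =>
        MajorityConcurrentlyKnows run loc S (fun c => φ c ∧ X c)) ∧
    ∃ CC : Cut → Prop,
      (CC = MajorityConcurrentlyKnows run loc S (fun c => φ c ∧ CC c)) ∧
      (∀ X : Cut → Prop,
        X ≤ MajorityConcurrentlyKnows run loc S (fun c => φ c ∧ X c) → X ≤ CC) ∧
      ((∀ i ∈ L, LocalFact run loc i φ) → 3 * L.card ≥ 2 * Fintype.card P →
        ∀ c, CC c → φ c) := by

  classical
  have hmono : Monotone (fun (X : Cut → Prop) =>
      MajorityConcurrentlyKnows run loc S (fun c => φ c ∧ X c)) := by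
    intro X Y hXY c hc i hi c' hc'
    obtain ⟨c'', h1, h2, h3, h4⟩ := hc i hi c' hc'
    exact ⟨c'', h1, h2, h3, hXY _ h4⟩
  refine ⟨hmono, ?_⟩
  set f : (Cut → Prop) →o (Cut → Prop) :=
    ⟨fun X => MajorityConcurrentlyKnows run loc S (fun c => φ c ∧ X c), hmono⟩
  refine ⟨OrderHom.gfp f, ?_, ?_, ?_⟩
  · exact (f.map_gfp).symm
  · intro X hX; exact OrderHom.le_gfp f hX
  · intro hlocal hLcard c hc
    -- S ∩ L is nonempty
    have hinter : (S ∩ L).Nonempty := by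
      by_contra h
      rw [Finset.not_nonempty_iff_eq_empty] at h
      have := Finset.card_inter_add_card_union S L
      rw [h, Finset.card_empty] at this
      have hle : (S ∪ L).card ≤ Fintype.card P := Finset.card_le_univ _
      omega
    obtain ⟨i, hiSL⟩ := hinter
    have hiS : i ∈ S := (Finset.mem_inter.mp hiSL).1
    have hiL : i ∈ L := (Finset.mem_inter.mp hiSL).2
    have hfix : OrderHom.gfp f ≤ f (OrderHom.gfp f) := le_of_eq (f.map_gfp).symm
    have hk := hfix c hc i hiS c rfl
    obtain ⟨c', _, hloc, hφ, _⟩ := hk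
    exact hlocal i hiL c' hφ c hloc.symm
end

section
/- (Quorum concurrent knowledge of local facts.) Let P be a finite type of process identifiers with a stake function w : P → ℕ of total weight W = w(P, summed), let L ⊆ P be a set of processes to each of which the fact φ is local, with 3·w(L) ≥ 2·W, and let S ⊆ P with 3·w(S) > 2·W. Define Q^C(φ) to hold at a cut c iff K_i(P_i(φ)) holds at c for every i ∈ S ('quorum concurrently knows φ'). Then for every cut c, Q^C(φ) holding at c implies that φ holds at c. -/
/-- "Quorum concurrently knows": every process of the set `S` (a quorum by
stake) knows that it partially knows `φ`. -/
def QuorumConcurrentlyKnows {Cut R P St : Type*} (run : Cut → R)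
    (loc : P → Cut → St) (S : Finset P) (φ : Cut → Prop) (c : Cut) : Prop :=
  ∀ i ∈ S, Knows run loc i (PartiallyKnows run loc i φ) c

/-- **Quorum concurrent knowledge of local facts.**  Let `w` be a stake
function on processes with total stake `W`.  If `φ` is local to each process
of a set `L` with `3·w(L) ≥ 2·W` and `S` is a set of processes with
`3·w(S) > 2·W`, then `Q^C(φ) ⇒ φ` at every cut. -/
theorem quorum_concurrently_knows_of_local_fact
    {Cut R St : Type*} {P : Type*} [Fintype P]
    (run : Cut → R) (loc : P → Cut → St) (φ : Cut → Prop)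
    (w : P → ℕ) (W : ℕ) (hW : W = ∑ i, w i)
    (L S : Finset P)
    (hL : ∀ i ∈ L, LocalFact run loc i φ)
    (hLw : 3 * ∑ i ∈ L, w i ≥ 2 * W)
    (hSw : 3 * ∑ i ∈ S, w i > 2 * W) :
    ∀ c, QuorumConcurrentlyKnows run loc S φ c → φ c := by
  classical
  intro c hQ
  have hne : (L ∩ S).Nonempty := by
    by_contra h
    rw [Finset.not_nonempty_iff_eq_empty] at h
    have hdisj : Disjoint L S := Finset.disjoint_iff_inter_eq_empty.mpr h
    have hsum : ∑ i ∈ L, w i + ∑ i ∈ S, w i = ∑ i ∈ L ∪ S, w i :=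
      (Finset.sum_union hdisj).symm
    have hle : ∑ i ∈ L ∪ S, w i ≤ W := by
      rw [hW]
      exact Finset.sum_le_sum_of_subset (Finset.subset_univ _)
    omega
  obtain ⟨i, hi⟩ := hne
  rw [Finset.mem_inter] at hi
  obtain ⟨c', _, hloc, hφ⟩ := hQ i hi.2 c rfl
  exact hL i hi.1 c' hφ c hloc.symm
end

section
/- (Weighted-median timestamps are Byzantine fault tolerant.) Let N be a finite nonempty set of validators with stake function w : N → ℕ and total stake W, let B ⊆ N be the set of Byzantine validators with 2·w(B) < W (in particular this holds when 3·w(B) < W), and suppose the set N \ B of honest validators is nonempty. Let t : N → ℕ assign each validator a reported timestamp, and let m ∈ ℕ be any weighted median of the reported timestamps, i.e., a value such that 2·w({v ∈ N : t(v) ≤ m}) ≥ W and 2·w({v ∈ N : t(v) ≥ m}) ≥ W. Then m lies between the minimum and the maximum of the timestamps reported by honest validators: min over N \ B of t ≤ m ≤ max over N \ B of t. Hence the median consensus time cannot be driven outside the range of honest timestamps by malicious nodes. -/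
/-- **Weighted-median timestamps are Byzantine fault tolerant.**  Let `w` be a
stake function on a finite nonempty set of validators with total stake `W`,
let `B` be the set of Byzantine validators with `2·w(B) < W` (in particular
this holds when `3·w(B) < W`), and assume the set of honest validators `Bᶜ`
is nonempty.  Let `t` report a timestamp for each validator, and let `m` be
any stake-weighted median of the reported timestamps, i.e.
`2·w({v : t v ≤ m})  ≥ W` and `2·w({v : t v ≥ m}) ≥ W`.  Then `m` lies between
the minimum and the maximum honest timestamps. -/
theorem weighted_median_bft {α : Type*} [Fintype α] [Nonempty α] [DecidableEq α]
    (w : α → ℕ) (W : ℕ) (hW : W = ∑ v, w v)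
    (B : Finset α) (hB : 2 * ∑ v ∈ B, w v < W)
    (hhonest : Bᶜ.Nonempty)
    (t : α → ℕ) (m : ℕ)
    (hlow : 2 * ∑ v ∈ Finset.univ.filter (fun v => t v ≤ m), w v ≥ W)
    (hhigh : 2 * ∑ v ∈ Finset.univ.filter (fun v => t v ≥ m), w v ≥ W) :
    Bᶜ.inf' hhonest t ≤ m ∧ m ≤ Bᶜ.sup' hhonest t := by
  constructor
  · by_contra h
    push_neg at h
    have hsub : Finset.univ.filter (fun v => t v ≤ m) ⊆ B := by
      intro v hv
      simp only [Finset.mem_filter] at hv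
      by_contra hvB
      have hvC : v ∈ Bᶜ := Finset.mem_compl.mpr hvB
      exact absurd hv.2 (not_le.mpr (lt_of_lt_of_le h (Finset.inf'_le _ hvC)))
    have := Finset.sum_le_sum_of_subset (f := w) hsub
    omega
  · by_contra h
    push_neg at h
    have hsub : Finset.univ.filter (fun v => t v ≥ m) ⊆ B := by
      intro v hv
      simp only [Finset.mem_filter] at hv
      by_contra hvB
      have hvC : v ∈ Bᶜ := Finset.mem_compl.mpr hvB
      exact absurd hv.2 (not_le.mpr (lt_of_le_of_lt (Finset.le_sup' _ hvC) h))
    have := Finset.sum_le_sum_of_subset (f := w) hsub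
    omega
end
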